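/- Let u, û ∈ ℂ^{n₁} and v, v̂ ∈ ℂ^{n₂} be unit vectors. Then ‖uv* − ûv̂*‖_F ≥ (1/√2)·‖vv* − v̂v̂*‖_F. -/

import Mathlib

open scoped ComplexConjugate InnerProductSpace

/-- Outer product `u v*` of two complex vectors. -/
noncomputable def outerProd {n₁ n₂ : ℕ} (u : EuclideanSpace ℂ (Fin n₁))
    (v : EuclideanSpace ℂ (Fin n₂)) : Matrix (Fin n₁) (Fin n₂) ℂ :=
  fun i j => u i * conj (v j)

/-- Frobenius norm of a complex matrix. -/
noncomputable def frob {n₁ n₂ : ℕ} (M : Matrix (Fin n₁) (Fin n₂) ℂ) : ℝ :=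
  Real.sqrt (∑ i, ∑ j, ‖M i j‖ ^ 2)

/-!
Expanding the Frobenius norms gives `‖u v* − û v̂*‖_F² = 2 − 2 Re (⟪û, u⟫ ⟪v, v̂⟫)`, which is at
least `2 − 2 t` with `t = |⟪v, v̂⟫|` because `|⟪û, u⟫| ≤ 1`, and `‖v v* − v̂ v̂*‖_F² = 2 − 2 t²`.
The claim is then `1 − t² ≤ 2 − 2 t`, i.e. `(1 − t)² ≥ 0`.
-/

lemma frob_nonneg {n₁ n₂ : ℕ} (M : Matrix (Fin n₁) (Fin n₂) ℂ) : 0 ≤ frob M :=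
  Real.sqrt_nonneg _

lemma frob_sq {n₁ n₂ : ℕ} (M : Matrix (Fin n₁) (Fin n₂) ℂ) :
    frob M ^ 2 = ∑ i, ∑ j, ‖M i j‖ ^ 2 :=
  Real.sq_sqrt (Finset.sum_nonneg fun _ _ => Finset.sum_nonneg fun _ _ => sq_nonneg _)

lemma inner_euclideanSpace_eq_sum {n : ℕ} (x y : EuclideanSpace ℂ (Fin n)) :
    ⟪x, y⟫_ℂ = ∑ i, conj (x i) * y i := by
  simp only [PiLp.inner_apply, RCLike.inner_apply, mul_comm]

lemma frob_outerProd_sub_outerProd_sq {m k : ℕ} (a b : EuclideanSpace ℂ (Fin m))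
    (c d : EuclideanSpace ℂ (Fin k)) :
    frob (outerProd a c - outerProd b d) ^ 2
      = ‖a‖ ^ 2 * ‖c‖ ^ 2 + ‖b‖ ^ 2 * ‖d‖ ^ 2 - 2 * (⟪b, a⟫_ℂ * ⟪c, d⟫_ℂ).re := by
  have hcross : (⟪b, a⟫_ℂ * ⟪c, d⟫_ℂ).re
      = ∑ i, ∑ j, (a i * conj (c j) * conj (b i * conj (d j))).re := by
    simp only [inner_euclideanSpace_eq_sum, Finset.sum_mul_sum, Complex.re_sum]
    refine Finset.sum_congr rfl fun i _ => Finset.sum_congr rfl fun j _ => ?_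
    simp only [map_mul, Complex.conj_conj]
    ring_nf
  rw [frob_sq, hcross]
  simp only [EuclideanSpace.norm_sq_eq, Finset.sum_mul_sum]
  simp only [Finset.mul_sum, ← Finset.sum_add_distrib, ← Finset.sum_sub_distrib (G := ℝ)]
  refine Finset.sum_congr rfl fun i _ => Finset.sum_congr rfl fun j _ => ?_
  simp only [Matrix.sub_apply, outerProd, Complex.sq_norm, Complex.normSq_sub, Complex.normSq_mul,
    Complex.normSq_conj]

lemma re_mul_le_norm_of_norm_le_one {z w : ℂ} (hz : ‖z‖ ≤ 1) : (z * w).re ≤ ‖w‖ :=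
  calc (z * w).re ≤ ‖z‖ * ‖w‖ := (Complex.re_le_norm _).trans_eq (norm_mul _ _)
    _ ≤ ‖w‖ := mul_le_of_le_one_left (norm_nonneg _) hz

/-- For unit vectors, `‖uv* − ûv̂*‖_F ≥ (1/√2)·‖vv* − v̂v̂*‖_F`. -/
theorem frob_outer_sub_outer_ge {n₁ n₂ : ℕ}
    (u uhat : EuclideanSpace ℂ (Fin n₁)) (v vhat : EuclideanSpace ℂ (Fin n₂))
    (hu : ‖u‖ = 1) (huhat : ‖uhat‖ = 1) (hv : ‖v‖ = 1) (hvhat : ‖vhat‖ = 1) :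
    (1 / Real.sqrt 2) * frob (outerProd v v - outerProd vhat vhat)
      ≤ frob (outerProd u v - outerProd uhat vhat) := by
  set t := ‖⟪v, vhat⟫_ℂ‖
  have hre : (⟪uhat, u⟫_ℂ * ⟪v, vhat⟫_ℂ).re ≤ t := by
    refine re_mul_le_norm_of_norm_le_one ((norm_inner_le_norm uhat u).trans_eq ?_)
    rw [hu, huhat, one_mul]
  have hvv : (⟪vhat, v⟫_ℂ * ⟪v, vhat⟫_ℂ).re = t ^ 2 := by
    rw [← inner_conj_symm vhat v, RCLike.conj_mul]
    norm_cast
  have hlhs := frob_outerProd_sub_outerProd_sq v vhat v vhat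
  have hrhs := frob_outerProd_sub_outerProd_sq u uhat v vhat
  rw [hv, hvhat, hvv] at hlhs
  rw [hu, huhat, hv, hvhat] at hrhs
  rw [← pow_le_pow_iff_left₀ (mul_nonneg (by positivity) (frob_nonneg _)) (frob_nonneg _)
    two_ne_zero, mul_pow, hlhs, hrhs, div_pow, Real.sq_sqrt zero_le_two]
  nlinarith [sq_nonneg (1 - t)]
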